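/- Block-diagonal separability of the loggle objective: suppose the minimizer {Ω̂(t_i)}_{i∈N} of L(𝛀) = (1/√|N|) Σ_{i∈N} [tr(Ω(t_i) Σ̂(t_i)) - log det Ω(t_i)] + λ Σ_{u≠v} sqrt(Σ_{i∈N} Ω_{uv}(t_i)^2) over positive definite matrices has block-diagonal form Ω̂(t_i) = diag(Ω̂_1(t_i), Ω̂_2(t_i)) for all i, with all Ω̂_1(t_i) of the same dimension p_1. Then {Ω̂_1(t_i)} minimizes the analogous objective built from the upper-left p_1×p_1 blocks of the Σ̂(t_i), and {Ω̂_2(t_i)} minimizes the analogous objective built from the lower-right blocks. -/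

import Mathlib

open scoped BigOperators
open Matrix

/-- The loggle objective function. -/
noncomputable def loggleObj {ι n : Type*} [Fintype ι] [Fintype n] [DecidableEq n]
    (S : ι → Matrix n n ℝ) (lam : ℝ) (Om : ι → Matrix n n ℝ) : ℝ :=
  (1 / Real.sqrt (Fintype.card ι)) *
      ∑ i, ((Om i * S i).trace - Real.log (Om i).det)
    + lam * ∑ u, ∑ v ∈ Finset.univ.filter (fun v => v ≠ u),
        Real.sqrt (∑ i, (Om i u v) ^ 2)

/-! On block-diagonal arguments (with block-diagonal `S`) the loggle objective is the sum of the
two blockwise objectives: trace and log-determinant split over the blocks, and the group penalty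
only sees off-diagonal entries, which vanish across blocks. Replacing one block of the minimizer
by any positive definite competitor keeps the matrix positive definite, so minimality of the
whole tuple gives minimality of each block. -/

namespace Matrix

variable {m n R : Type*} [Fintype m] [Fintype n]

theorem trace_fromBlocks [AddCommMonoid R] (A : Matrix m m R) (B : Matrix m n R)
    (C : Matrix n m R) (D : Matrix n n R) :
    (fromBlocks A B C D).trace = A.trace + D.trace :=
  Fintype.sum_sum_type _

theorem PosDef.fromBlocks_zero_zero [Ring R] [PartialOrder R] [StarRing R] [IsOrderedRing R]
    {A : Matrix m m R} {D : Matrix n n R} (hA : A.PosDef) (hD : D.PosDef) :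
    (fromBlocks A 0 0 D).PosDef := by
  refine .of_dotProduct_mulVec_pos (hA.isHermitian.fromBlocks (by simp) hD.isHermitian) ?_
  intro x hx
  have hquad : star x ⬝ᵥ (fromBlocks A 0 0 D *ᵥ x) =
      star (x ∘ Sum.inl) ⬝ᵥ (A *ᵥ (x ∘ Sum.inl)) + star (x ∘ Sum.inr) ⬝ᵥ (D *ᵥ (x ∘ Sum.inr)) := by
    simp only [fromBlocks_mulVec, zero_mulVec, add_zero, zero_add, dotProduct_block,
      Sum.elim_comp_inl, Sum.elim_comp_inr]
    rfl
  have hblock : x ∘ Sum.inl ≠ 0 ∨ x ∘ Sum.inr ≠ 0 := by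
    by_contra! h
    exact hx (funext (Sum.rec (congrFun h.1) (congrFun h.2)))
  rw [hquad]
  rcases hblock with hl | hr
  · exact add_pos_of_pos_of_nonneg (hA.dotProduct_mulVec_pos hl)
      (hD.posSemidef.dotProduct_mulVec_nonneg _)
  · exact add_pos_of_nonneg_of_pos (hA.posSemidef.dotProduct_mulVec_nonneg _)
      (hD.dotProduct_mulVec_pos hr)

end Matrix

theorem sum_offDiag_fromBlocks_zero_zero {ι m n R M : Type*} [Fintype m] [Fintype n]
    [DecidableEq m] [DecidableEq n] [Zero R] [AddCommMonoid M] (A : ι → Matrix m m R) (D : ι → Matrix n n R)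
    (φ : (ι → R) → M) (hφ : φ 0 = 0) :
    ∑ u, ∑ v ∈ Finset.univ.filter (fun v => v ≠ u), φ (fun i => fromBlocks (A i) 0 0 (D i) u v)
      = ∑ u, ∑ v ∈ Finset.univ.filter (fun v => v ≠ u), φ (fun i => A i u v)
        + ∑ u, ∑ v ∈ Finset.univ.filter (fun v => v ≠ u), φ (fun i => D i u v) := by
  simp only [Finset.sum_filter, Fintype.sum_sum_type]
  simp [← Pi.zero_def, hφ]

theorem loggleObj_fromBlocks {ι m n : Type*} [Fintype ι] [Fintype m] [Fintype n]
    [DecidableEq m] [DecidableEq n] (lam : ℝ)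
    (S₁ : ι → Matrix m m ℝ) (S₂ : ι → Matrix n n ℝ)
    (A : ι → Matrix m m ℝ) (D : ι → Matrix n n ℝ)
    (hA : ∀ i, (A i).det ≠ 0) (hD : ∀ i, (D i).det ≠ 0) :
    loggleObj (fun i => fromBlocks (S₁ i) 0 0 (S₂ i)) lam (fun i => fromBlocks (A i) 0 0 (D i))
      = loggleObj S₁ lam A + loggleObj S₂ lam D := by
  have hfit : ∀ i, (fromBlocks (A i) 0 0 (D i) * fromBlocks (S₁ i) 0 0 (S₂ i)).trace
      - Real.log (fromBlocks (A i) 0 0 (D i)).det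
      = ((A i * S₁ i).trace - Real.log (A i).det) + ((D i * S₂ i).trace - Real.log (D i).det) := by
    intro i
    rw [fromBlocks_multiply, trace_fromBlocks, det_fromBlocks_zero₁₂, Real.log_mul (hA i) (hD i)]
    simp only [Matrix.mul_zero, add_zero, zero_add]
    ring
  have hpen := sum_offDiag_fromBlocks_zero_zero A D (fun x => Real.sqrt (∑ i, x i ^ 2))
    (by simp)
  simp only [loggleObj, hfit, Finset.sum_add_distrib, hpen]
  ring

theorem stmt_6_general {ι : Type*} [Fintype ι] {p₁ p₂ : ℕ}
    (lam : ℝ)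
    (S₁ : ι → Matrix (Fin p₁) (Fin p₁) ℝ) (S₂ : ι → Matrix (Fin p₂) (Fin p₂) ℝ)
    (S : ι → Matrix (Fin p₁ ⊕ Fin p₂) (Fin p₁ ⊕ Fin p₂) ℝ)
    (hS : ∀ i, S i = Matrix.fromBlocks (S₁ i) 0 0 (S₂ i))
    (O₁ : ι → Matrix (Fin p₁) (Fin p₁) ℝ) (O₂ : ι → Matrix (Fin p₂) (Fin p₂) ℝ)
    (hO₁pd : ∀ i, (O₁ i).PosDef) (hO₂pd : ∀ i, (O₂ i).PosDef)
    (hmin : ∀ Om : ι → Matrix (Fin p₁ ⊕ Fin p₂) (Fin p₁ ⊕ Fin p₂) ℝ,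
      (∀ i, (Om i).PosDef) →
      loggleObj S lam (fun i => Matrix.fromBlocks (O₁ i) 0 0 (O₂ i))
        ≤ loggleObj S lam Om) :
    (∀ Om₁ : ι → Matrix (Fin p₁) (Fin p₁) ℝ, (∀ i, (Om₁ i).PosDef) →
      loggleObj S₁ lam O₁ ≤ loggleObj S₁ lam Om₁) ∧
    (∀ Om₂ : ι → Matrix (Fin p₂) (Fin p₂) ℝ, (∀ i, (Om₂ i).PosDef) →
      loggleObj S₂ lam O₂ ≤ loggleObj S₂ lam Om₂) := by
  obtain rfl : S = fun i => fromBlocks (S₁ i) 0 0 (S₂ i) := funext hS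
  have hsplit {A : ι → Matrix (Fin p₁) (Fin p₁) ℝ} {D : ι → Matrix (Fin p₂) (Fin p₂) ℝ}
      (hA : ∀ i, (A i).PosDef) (hD : ∀ i, (D i).PosDef) :=
    loggleObj_fromBlocks lam S₁ S₂ A D (fun i => (hA i).det_pos.ne') (fun i => (hD i).det_pos.ne')
  have hO := hsplit hO₁pd hO₂pd
  refine ⟨fun Om₁ hOm₁ => ?_, fun Om₂ hOm₂ => ?_⟩
  · have h := hmin _ fun i => (hOm₁ i).fromBlocks_zero_zero (hO₂pd i)
    rw [hO, hsplit hOm₁ hO₂pd] at h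
    linarith
  · have h := hmin _ fun i => (hO₁pd i).fromBlocks_zero_zero (hOm₂ i)
    rw [hO, hsplit hO₁pd hOm₂] at h
    linarith

/-- Block-diagonal separability of the loggle objective: if the minimizer is
block diagonal (conformally with block-diagonal `Σ̂`'s), then each block of the
minimizer minimizes the corresponding blockwise loggle objective. -/
theorem stmt_6 {ι : Type*} [Fintype ι] [Nonempty ι] {p₁ p₂ : ℕ}
    (lam : ℝ) (hlam : 0 < lam)
    (S₁ : ι → Matrix (Fin p₁) (Fin p₁) ℝ) (S₂ : ι → Matrix (Fin p₂) (Fin p₂) ℝ)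
    (hS₁ : ∀ i, (S₁ i).PosSemidef) (hS₂ : ∀ i, (S₂ i).PosSemidef)
    (S : ι → Matrix (Fin p₁ ⊕ Fin p₂) (Fin p₁ ⊕ Fin p₂) ℝ)
    (hS : ∀ i, S i = Matrix.fromBlocks (S₁ i) 0 0 (S₂ i))
    (O₁ : ι → Matrix (Fin p₁) (Fin p₁) ℝ) (O₂ : ι → Matrix (Fin p₂) (Fin p₂) ℝ)
    (hO₁pd : ∀ i, (O₁ i).PosDef) (hO₂pd : ∀ i, (O₂ i).PosDef)
    (hmin : ∀ Om : ι → Matrix (Fin p₁ ⊕ Fin p₂) (Fin p₁ ⊕ Fin p₂) ℝ,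
      (∀ i, (Om i).PosDef) →
      loggleObj S lam (fun i => Matrix.fromBlocks (O₁ i) 0 0 (O₂ i))
        ≤ loggleObj S lam Om) :
    (∀ Om₁ : ι → Matrix (Fin p₁) (Fin p₁) ℝ, (∀ i, (Om₁ i).PosDef) →
      loggleObj S₁ lam O₁ ≤ loggleObj S₁ lam Om₁) ∧
    (∀ Om₂ : ι → Matrix (Fin p₂) (Fin p₂) ℝ, (∀ i, (Om₂ i).PosDef) →
      loggleObj S₂ lam O₂ ≤ loggleObj S₂ lam Om₂) :=
  stmt_6_general lam S₁ S₂ S hS O₁ O₂ hO₁pd hO₂pd hmin
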